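/- arXiv:1805.06295 — 3 statements merged into one kernel-verified Lean document; each statement's English description precedes it below -/
import Mathlib

section
/- Let Z_1,...,Z_N be i.i.d. standard normal random variables and let η_1,...,η_N ≥ 0 be constants, not all zero. Define X = Σ_{i=1}^N η_i (Z_i² − 1). Then for every x > 0, P(X ≥ 2‖η‖₂√x + 2‖η‖_∞ x) ≤ exp(−x). -/
/-!
Chernoff's method. For `0 ≤ u < 1/2` a standard Gaussian `Z` has
`E exp (u (Z² - 1)) = e^{-u} / √(1 - 2u) ≤ exp (u² / (1 - 2u))`, the inequality being `y ≤ sinh y`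
at `y = -log (1 - 2u)`. By independence, `X` then satisfies
`log E exp (t X) ≤ ‖η‖₂² t² / (1 - 2‖η‖_∞ t)` for `0 ≤ t < 1 / (2‖η‖_∞)`, and the Chernoff bound
at `t = √x / (‖η‖₂ + 2‖η‖_∞ √x)` is exactly `exp (-x)`.
-/

open MeasureTheory ProbabilityTheory Real

theorem Real.neg_log_le_inv_sub_div_two {w : ℝ} (hw₀ : 0 < w) (hw₁ : w ≤ 1) :
    -log w ≤ (w⁻¹ - w) / 2 := by
  have := self_le_sinh_iff.mpr (neg_nonneg.mpr (log_nonpos hw₀.le hw₁))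
  rw [sinh_neg, sinh_log hw₀] at this
  linarith

theorem mgf_sq_gaussianReal {s : ℝ} (hs : s < 1 / 2) :
    mgf (fun z ↦ z ^ 2) (gaussianReal 0 1) s = (√(1 - 2 * s))⁻¹ := by
  have hpdf (z : ℝ) : gaussianPDFReal 0 1 z • exp (s * z ^ 2) =
      (√(2 * π))⁻¹ * exp (-(1 / 2 - s) * z ^ 2) := by
    rw [gaussianPDFReal, smul_eq_mul, mul_assoc, ← exp_add]
    congr 2 <;> push_cast <;> ring_nf
  have h2π : 0 < 2 * π := by positivity
  have hs' : 0 < 1 - 2 * s := by linarith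
  rw [mgf, integral_gaussianReal_eq_integral_smul one_ne_zero]
  simp_rw [hpdf]
  rw [integral_const_mul, integral_gaussian, show π / (1 / 2 - s) = 2 * π / (1 - 2 * s) by
    field_simp, sqrt_div h2π.le]
  field_simp

theorem mgf_sq_sub_one_gaussianReal {u : ℝ} (hu : u < 1 / 2) :
    mgf (fun z ↦ z ^ 2 - 1) (gaussianReal 0 1) u = exp (-u) * (√(1 - 2 * u))⁻¹ := by
  simp_rw [sub_eq_add_neg (_ ^ 2)]
  rw [mgf_add_const, mgf_sq_gaussianReal hu, mul_comm, mul_neg_one]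

theorem mgf_sq_sub_one_gaussianReal_le {u : ℝ} (hu₀ : 0 ≤ u) (hu : u < 1 / 2) :
    mgf (fun z ↦ z ^ 2 - 1) (gaussianReal 0 1) u ≤ exp (u ^ 2 / (1 - 2 * u)) := by
  have hexponent : -u - log (1 - 2 * u) / 2 ≤ u ^ 2 / (1 - 2 * u) := by
    obtain ⟨w, rfl⟩ : ∃ w, u = (1 - w) / 2 := ⟨1 - 2 * u, by ring⟩
    rw [show 1 - 2 * ((1 - w) / 2) = w by ring]
    have hw : 0 < w := by linarith
    have := Real.neg_log_le_inv_sub_div_two hw (by linarith)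
    calc -((1 - w) / 2) - log w / 2 ≤ -((1 - w) / 2) + (w⁻¹ - w) / 4 := by linarith
      _ = ((1 - w) / 2) ^ 2 / w := by field_simp; ring
  rw [mgf_sq_sub_one_gaussianReal hu, ← exp_log (sqrt_pos.mpr (by linarith : 0 < 1 - 2 * u)),
    log_sqrt (by linarith), ← exp_neg, ← exp_add, exp_le_exp]
  linarith

theorem mgf_sq_sub_one_gaussianReal_pos {u : ℝ} (hu : u < 1 / 2) :
    0 < mgf (fun z ↦ z ^ 2 - 1) (gaussianReal 0 1) u := by
  rw [mgf_sq_sub_one_gaussianReal hu]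
  have : 0 < 1 - 2 * u := by linarith
  positivity

theorem prod_mgf_sq_sub_one_gaussianReal_le {ι : Type*} [Fintype ι] {η : ι → ℝ} {b t : ℝ}
    (hη : ∀ i, 0 ≤ η i) (hηb : ∀ i, η i ≤ b) (ht : 0 ≤ t) (hbt : 2 * b * t < 1) :
    ∏ i, mgf (fun z ↦ z ^ 2 - 1) (gaussianReal 0 1) (η i * t) ≤
      exp ((∑ i, η i ^ 2) * t ^ 2 / (1 - 2 * b * t)) := by
  have hηt (i : ι) : η i * t ≤ b * t := mul_le_mul_of_nonneg_right (hηb i) ht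
  calc ∏ i, mgf (fun z ↦ z ^ 2 - 1) (gaussianReal 0 1) (η i * t)
      ≤ ∏ i, exp ((η i * t) ^ 2 / (1 - 2 * (η i * t))) :=
        Finset.prod_le_prod (fun i _ ↦ mgf_nonneg) fun i _ ↦
          mgf_sq_sub_one_gaussianReal_le (mul_nonneg (hη i) ht) (by linarith [hηt i])
    _ ≤ ∏ i, exp (η i ^ 2 * t ^ 2 / (1 - 2 * b * t)) :=
        Finset.prod_le_prod (fun i _ ↦ (exp_pos _).le) fun i _ ↦ exp_le_exp.mpr <| by
          rw [mul_pow]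
          exact div_le_div_of_nonneg_left (by positivity) (by linarith) (by linarith [hηt i])
    _ = exp ((∑ i, η i ^ 2) * t ^ 2 / (1 - 2 * b * t)) := by
        rw [← exp_sum, Finset.sum_mul, Finset.sum_div]

section

variable {Ω : Type*} [MeasurableSpace Ω] {P : Measure Ω}

theorem mgf_const_mul_sq_sub_one_of_map_eq {Z : Ω → ℝ} (hZ : P.map Z = gaussianReal 0 1)
    (a t : ℝ) :
    mgf (fun ω ↦ a * (Z ω ^ 2 - 1)) P t = mgf (fun z ↦ z ^ 2 - 1) (gaussianReal 0 1) (a * t) := by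
  have hZm : AEMeasurable Z P := .of_map_ne_zero (by rw [hZ]; exact IsProbabilityMeasure.ne_zero _)
  rw [mgf_const_mul, ← hZ, mgf_map hZm (by fun_prop)]
  rfl

theorem mgf_sum_mul_sq_sub_one {ι : Type*} [Fintype ι] {Z : ι → Ω → ℝ} (hindep : iIndepFun Z P)
    (hlaw : ∀ i, P.map (Z i) = gaussianReal 0 1) (η : ι → ℝ) (t : ℝ) :
    mgf (fun ω ↦ ∑ i, η i * (Z i ω ^ 2 - 1)) P t =
      ∏ i, mgf (fun z ↦ z ^ 2 - 1) (gaussianReal 0 1) (η i * t) := by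
  have hZm (i : ι) : AEMeasurable (Z i) P :=
    .of_map_ne_zero (by rw [hlaw i]; exact IsProbabilityMeasure.ne_zero _)
  have hY := hindep.comp (fun i z ↦ η i * (z ^ 2 - 1)) fun i ↦ by fun_prop
  rw [show (fun ω ↦ ∑ i, η i * (Z i ω ^ 2 - 1)) = ∑ i, (fun z ↦ η i * (z ^ 2 - 1)) ∘ Z i by
    ext ω; simp [Finset.sum_apply], hY.mgf_sum₀ (fun i ↦ by fun_prop)]
  exact Finset.prod_congr rfl fun i _ ↦ mgf_const_mul_sq_sub_one_of_map_eq (hlaw i) _ _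

theorem measure_ge_le_exp_neg_of_mgf_le [IsFiniteMeasure P] {X : Ω → ℝ} {v c x : ℝ}
    (hv : 0 < v) (hc : 0 ≤ c) (hx : 0 ≤ x)
    (h_int : ∀ t, 0 ≤ t → c * t < 1 → Integrable (fun ω ↦ exp (t * X ω)) P)
    (h_mgf : ∀ t, 0 ≤ t → c * t < 1 → mgf X P t ≤ exp (v * t ^ 2 / (1 - c * t))) :
    P.real {ω | 2 * √v * √x + c * x ≤ X ω} ≤ exp (-x) := by
  have hsv : 0 < √v := sqrt_pos.mpr hv
  have hD : 0 < √v + c * √x := by positivity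
  -- this `t` makes the Chernoff exponent `-t (2√v√x + c x) + v t² / (1 - c t)` equal to `-x`
  set t := √x / (√v + c * √x) with ht_def
  have ht : 0 ≤ t := by positivity
  have hct : 1 - c * t = √v / (√v + c * √x) := by rw [ht_def]; field_simp; ring
  have hct₁ : c * t < 1 := by linarith [show 0 < 1 - c * t by rw [hct]; positivity]
  calc P.real {ω | 2 * √v * √x + c * x ≤ X ω}
      ≤ exp (-t * (2 * √v * √x + c * x)) * mgf X P t :=
        measure_ge_le_exp_mul_mgf _ ht (h_int t ht hct₁)
    _ ≤ exp (-t * (2 * √v * √x + c * x)) * exp (v * t ^ 2 / (1 - c * t)) := by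
        gcongr; exact h_mgf t ht hct₁
    _ = exp (-x) := by
        rw [← exp_add, hct]
        congr 1
        have hv2 := sq_sqrt hv.le
        have hx2 := sq_sqrt hx
        rw [ht_def]
        field_simp
        linear_combination (-√x ^ 2) * hv2 + (-√v ^ 2) * hx2

end

/-- Laurent–Massart upper-tail concentration inequality for weighted sums of
centered chi-squared variables. -/
theorem stmt_0
    {Ω : Type*} [MeasurableSpace Ω] (P : Measure Ω) [IsProbabilityMeasure P]
    {N : ℕ} (Z : Fin N → Ω → ℝ)
    (hindep : iIndepFun Z P)
    (hlaw : ∀ i, Measure.map (Z i) P = gaussianReal 0 1)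
    (η : Fin N → ℝ) (hη : ∀ i, 0 ≤ η i) (hη0 : η ≠ 0)
    (x : ℝ) (hx : 0 < x) :
    P {ω | 2 * Real.sqrt (∑ i, η i ^ 2) * Real.sqrt x + 2 * (⨆ i, η i) * x
            ≤ ∑ i, η i * (Z i ω ^ 2 - 1)}
      ≤ ENNReal.ofReal (Real.exp (-x)) := by
  obtain ⟨i₀, hi₀⟩ := Function.ne_iff.mp hη0
  have hηb (i : Fin N) : η i ≤ ⨆ i, η i := le_ciSup (Set.finite_range η).bddAbove i
  have hv : 0 < ∑ i, η i ^ 2 :=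
    Finset.sum_pos' (fun i _ ↦ sq_nonneg _)
      ⟨i₀, Finset.mem_univ _, pow_pos ((hη i₀).lt_of_ne' hi₀) 2⟩
  have hmgf (t : ℝ) (ht : 0 ≤ t) (hbt : 2 * (⨆ i, η i) * t < 1) :
      0 < mgf (fun ω ↦ ∑ i, η i * (Z i ω ^ 2 - 1)) P t ∧
        mgf (fun ω ↦ ∑ i, η i * (Z i ω ^ 2 - 1)) P t ≤
          exp ((∑ i, η i ^ 2) * t ^ 2 / (1 - 2 * (⨆ i, η i) * t)) := by
    rw [mgf_sum_mul_sq_sub_one hindep hlaw]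
    refine ⟨Finset.prod_pos fun i _ ↦ mgf_sq_sub_one_gaussianReal_pos ?_,
      prod_mgf_sq_sub_one_gaussianReal_le hη hηb ht hbt⟩
    nlinarith [hηb i]
  rw [ENNReal.le_ofReal_iff_toReal_le (measure_ne_top _ _) (exp_pos _).le]
  exact measure_ge_le_exp_neg_of_mgf_le hv (by linarith [hη i₀, hηb i₀]) hx.le
    (fun t ht hbt ↦ mgf_pos_iff.mp (hmgf t ht hbt).1) fun t ht hbt ↦ (hmgf t ht hbt).2
end

section
/- Let Z_1,...,Z_N be i.i.d. standard normal random variables and let η_1,...,η_N ≥ 0 be constants, not all zero. Define X = Σ_{i=1}^N η_i (Z_i² − 1). Then for every x > 0, P(X ≤ −2‖η‖₂√x) ≤ exp(−x). -/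
/-!
Chernoff's method. For a standard Gaussian `Z` and `c ≥ 0`,
`E exp (-c (Z² - 1)) = e^c / √(1 + 2c) ≤ e^{c²}` (the inequality is `log (1 + v) ≥ v - v²/2`),
so by independence `P(∑ ηᵢ (Zᵢ² - 1) ≤ ε) ≤ exp (t ε + t² ‖η‖²)` for every `t ≥ 0`.
Taking `ε = -2 ‖η‖ √x` and `t = √x / ‖η‖` makes the exponent `-x`.
-/

open MeasureTheory ProbabilityTheory Real

lemma integral_exp_neg_mul_sq_gaussianReal (c : ℝ) :
    ∫ z, exp (-c * z ^ 2) ∂gaussianReal 0 1 = (√(1 + 2 * c))⁻¹ := by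
  have hpdf (z : ℝ) : gaussianPDFReal 0 1 z • exp (-c * z ^ 2)
      = (√(2 * π))⁻¹ * exp (-(c + 1 / 2) * z ^ 2) := by
    rw [gaussianPDFReal, NNReal.coe_one, mul_one, smul_eq_mul, mul_assoc, ← exp_add]
    ring_nf
  simp_rw [integral_gaussianReal_eq_integral_smul one_ne_zero, hpdf, integral_const_mul,
    integral_gaussian, sqrt_div pi_pos.le, sqrt_mul zero_le_two]
  rw [show 1 + 2 * c = 2 * (c + 1 / 2) by ring, sqrt_mul zero_le_two]
  have : √π ≠ 0 := (sqrt_pos.2 pi_pos).ne'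
  field_simp

lemma mgf_sq_sub_one_of_map_eq_gaussianReal {Ω : Type*} [MeasurableSpace Ω] {P : Measure Ω}
    {X : Ω → ℝ} (hX : P.map X = gaussianReal 0 1) (t : ℝ) :
    mgf (fun ω ↦ X ω ^ 2 - 1) P t = exp (-t) * (√(1 - 2 * t))⁻¹ := by
  have hXm : AEMeasurable X P := .of_map_ne_zero (by simp [hX, NeZero.ne])
  rw [show (fun ω ↦ X ω ^ 2 - 1) = (fun z : ℝ ↦ z ^ 2 - 1) ∘ X from rfl,
    ← mgf_map hXm (by fun_prop), hX, mgf]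
  simp_rw [show ∀ z : ℝ, exp (t * (z ^ 2 - 1)) = exp (-t) * exp (-(-t) * z ^ 2) from
    fun z ↦ by rw [← exp_add]; ring_nf]
  rw [integral_const_mul, integral_exp_neg_mul_sq_gaussianReal]
  ring_nf

lemma exp_mul_inv_sqrt_one_add_two_mul_le_exp_sq {c : ℝ} (hc : 0 ≤ c) :
    exp c * (√(1 + 2 * c))⁻¹ ≤ exp (c ^ 2) := by
  have hlog : 2 * c - 2 * c ^ 2 ≤ log (1 + 2 * c) := by
    refine le_trans ?_ (le_log_one_add_of_nonneg (by positivity : 0 ≤ 2 * c))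
    rw [le_div_iff₀ (by positivity)]
    nlinarith [pow_nonneg hc 3]
  have hsqrt : exp (c - c ^ 2) ≤ √(1 + 2 * c) := by
    rw [le_sqrt (exp_nonneg _) (by positivity), ← exp_nat_mul, ← le_log_iff_exp_le (by positivity)]
    push_cast
    linarith
  rw [mul_inv_le_iff₀ (by positivity)]
  calc exp c = exp (c ^ 2) * exp (c - c ^ 2) := by rw [← exp_add]; ring_nf
    _ ≤ exp (c ^ 2) * √(1 + 2 * c) := by gcongr

lemma mgf_sq_sub_one_neg_le_of_map_eq_gaussianReal {Ω : Type*} [MeasurableSpace Ω]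
    {P : Measure Ω} {X : Ω → ℝ} (hX : P.map X = gaussianReal 0 1) {c : ℝ} (hc : 0 ≤ c) :
    mgf (fun ω ↦ X ω ^ 2 - 1) P (-c) ≤ exp (c ^ 2) := by
  rw [mgf_sq_sub_one_of_map_eq_gaussianReal hX, neg_neg, mul_neg, sub_neg_eq_add]
  exact exp_mul_inv_sqrt_one_add_two_mul_le_exp_sq hc

lemma measureReal_sum_mul_sq_sub_one_le_le {Ω ι : Type*} [MeasurableSpace Ω] {P : Measure Ω}
    [IsProbabilityMeasure P] [Fintype ι] {Z : ι → Ω → ℝ} (hindep : iIndepFun Z P)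
    (hlaw : ∀ i, P.map (Z i) = gaussianReal 0 1) {η : ι → ℝ} (hη : ∀ i, 0 ≤ η i)
    {t : ℝ} (ht : 0 ≤ t) (ε : ℝ) :
    P.real {ω | ∑ i, η i * (Z i ω ^ 2 - 1) ≤ ε} ≤ exp (t * ε + t ^ 2 * ∑ i, η i ^ 2) := by
  set Y : ι → Ω → ℝ := fun i ω ↦ η i * (Z i ω ^ 2 - 1)
  have hZ (i : ι) : AEMeasurable (Z i) P := .of_map_ne_zero (by simp [hlaw i, NeZero.ne])
  have hY (i : ι) : AEMeasurable (Y i) P := by fun_prop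
  have hYindep : iIndepFun Y P := hindep.comp (fun i z ↦ η i * (z ^ 2 - 1)) (fun i ↦ by fun_prop)
  have hsum : (∑ i, Y i) = fun ω ↦ ∑ i, η i * (Z i ω ^ 2 - 1) := by
    ext ω; simp [Y, Finset.sum_apply]
  -- each summand is bounded below by `-η i`, so `exp (-t * ∑ Y)` is bounded
  have hint : Integrable (fun ω ↦ exp (-t * (∑ i, Y i) ω)) P := by
    refine .of_bound (by fun_prop) (exp (t * ∑ i, η i)) (ae_of_all _ fun ω ↦ ?_)
    rw [norm_of_nonneg (exp_nonneg _), exp_le_exp, hsum, neg_mul, neg_le, ← mul_neg,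
      ← Finset.sum_neg_distrib]
    refine mul_le_mul_of_nonneg_left (Finset.sum_le_sum fun i _ ↦ ?_) ht
    nlinarith [hη i, mul_nonneg (hη i) (sq_nonneg (Z i ω))]
  have hmgf (i : ι) : mgf (Y i) P (-t) ≤ exp ((t * η i) ^ 2) := by
    rw [mgf_const_mul, show η i * -t = -(t * η i) by ring]
    exact mgf_sq_sub_one_neg_le_of_map_eq_gaussianReal (hlaw i) (mul_nonneg ht (hη i))
  calc P.real {ω | ∑ i, η i * (Z i ω ^ 2 - 1) ≤ ε}
      ≤ exp (-(-t) * ε) * mgf (∑ i, Y i) P (-t) := by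
        simpa only [hsum] using measure_le_le_exp_mul_mgf ε (neg_nonpos.2 ht) hint
    _ = exp (t * ε) * ∏ i, mgf (Y i) P (-t) := by rw [neg_neg, hYindep.mgf_sum₀ hY]
    _ ≤ exp (t * ε) * ∏ i, exp ((t * η i) ^ 2) := by
        gcongr with i
        · exact fun i _ ↦ mgf_nonneg
        · exact hmgf i
    _ = exp (t * ε + t ^ 2 * ∑ i, η i ^ 2) := by
        rw [← exp_sum, ← exp_add, Finset.mul_sum]
        simp_rw [mul_pow]

/-- Laurent–Massart lower-tail concentration inequality for weighted sums of
centered chi-squared variables. -/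
theorem stmt_1
    {Ω : Type*} [MeasurableSpace Ω] (P : Measure Ω) [IsProbabilityMeasure P]
    {N : ℕ} (Z : Fin N → Ω → ℝ)
    (hindep : iIndepFun Z P)
    (hlaw : ∀ i, Measure.map (Z i) P = gaussianReal 0 1)
    (η : Fin N → ℝ) (hη : ∀ i, 0 ≤ η i) (hη0 : η ≠ 0)
    (x : ℝ) (hx : 0 < x) :
    P {ω | ∑ i, η i * (Z i ω ^ 2 - 1) ≤ -(2 * Real.sqrt (∑ i, η i ^ 2) * Real.sqrt x)}
      ≤ ENNReal.ofReal (Real.exp (-x)) := by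
  set s := ∑ i, η i ^ 2
  have hs : 0 < s := by
    obtain ⟨j, hj⟩ := Function.ne_iff.1 hη0
    exact Finset.sum_pos' (fun i _ ↦ sq_nonneg _)
      ⟨j, Finset.mem_univ j, pow_pos ((hη j).lt_of_ne' hj) 2⟩
  have hbound := measureReal_sum_mul_sq_sub_one_le_le hindep hlaw hη
    (div_nonneg (sqrt_nonneg x) (sqrt_nonneg s)) (-(2 * √s * √x))
  rw [ENNReal.le_ofReal_iff_toReal_le (measure_ne_top _ _) (exp_nonneg _)]
  refine hbound.trans_eq (congrArg exp ?_)
  field_simp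
  rw [sq_sqrt hs.le, sq_sqrt hx.le]
  ring
end

section
/- Let ϖ = Σ_{j=1}^{N} η_{j} Z_j² with Z_j i.i.d. standard normal, η_j ≥ 0 not all zero, Σ_j η_j = 1. Then for every p ≥ 1 there is a constant K_p depending only on p (and not on N or the weights, provided Var(ϖ) is bounded above) such that E[|log ϖ|^p] ≤ K_p. -/
/-!
Since `|log w| ^ p ≤ (4p) ^ p (w ^ (1/4) + w ^ (-1/4))`, it suffices to bound
`E ϖ ^ (1/4) ≤ 1 + E ϖ = 2` and `E ϖ ^ (-1/4)` uniformly. Let `a = η_j` be the largest weight,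
so that `ϖ ≥ a Z_j²` and `E (ϖ - 1)² = Var(Z²) ∑ η_i² ≤ Var(Z²) a`. Where `ϖ ≥ 1/2` the negative
moment is at most `2`; where `ϖ < 1/2` we have `ϖ ^ (-1/4) ≤ 2 a ^ (-1/4) |Z_j| ^ (-1/2) (1 - ϖ)₊`,
and Hölder's inequality with exponents `3/2` and `3`, together with `(1 - ϖ)₊³ ≤ (ϖ - 1)²`,
bounds its expectation by `2 (E |Z| ^ (-3/4)) ^ (2/3) Var(Z²) ^ (1/3) a ^ (1/12)`, uniformly
since `a ≤ 1`.
-/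

open MeasureTheory ProbabilityTheory Real Set
open scoped ENNReal NNReal

lemma log_rpow_le_of_one_le {w p s : ℝ} (hw : 1 ≤ w) (hp : 0 < p) (hs : 0 < s) :
    log w ^ p ≤ (p / s) ^ p * w ^ s := by
  have hw0 : 0 ≤ w := zero_le_one.trans hw
  have hlog : log w ≤ p / s * w ^ (s / p) := by
    have := log_le_rpow_div hw0 (div_pos hs hp)
    rw [div_div_eq_mul_div] at this
    exact this.trans_eq (by ring)
  calc log w ^ p ≤ (p / s * w ^ (s / p)) ^ p := by gcongr; exact log_nonneg hw
    _ = (p / s) ^ p * w ^ s := by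
      rw [mul_rpow (by positivity) (by positivity), ← rpow_mul hw0, div_mul_cancel₀ _ hp.ne']

lemma abs_log_rpow_le {w p s : ℝ} (hw : 0 < w) (hp : 0 < p) (hs : 0 < s) :
    |log w| ^ p ≤ (p / s) ^ p * (w ^ s + w ^ (-s)) := by
  rcases le_total 1 w with h | h
  · rw [abs_of_nonneg (log_nonneg h)]
    calc log w ^ p ≤ (p / s) ^ p * w ^ s := log_rpow_le_of_one_le h hp hs
      _ ≤ _ := by gcongr; exact le_add_of_nonneg_right (by positivity)
  · have h' : 1 ≤ w⁻¹ := (one_le_inv₀ hw).mpr h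
    rw [← abs_neg, ← log_inv, abs_of_nonneg (log_nonneg h')]
    calc log w⁻¹ ^ p ≤ (p / s) ^ p * w⁻¹ ^ s := log_rpow_le_of_one_le h' hp hs
      _ = (p / s) ^ p * w ^ (-s) := by rw [inv_rpow hw.le, rpow_neg hw.le]
      _ ≤ _ := by gcongr; exact le_add_of_nonneg_left (by positivity)

lemma rpow_le_one_add {w s : ℝ} (hw : 0 ≤ w) (hs0 : 0 ≤ s) (hs1 : s ≤ 1) : w ^ s ≤ 1 + w := by
  rcases le_total w 1 with h | h
  · linarith [rpow_le_one hw h hs0]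
  · linarith [rpow_le_self_of_one_le h hs1]

lemma rpow_neg_quarter_le {a y w : ℝ} (ha : 0 < a) (hy : y ≠ 0) (h : a * y ^ 2 ≤ w) :
    w ^ (-(1/4) : ℝ) ≤ 2 + 2 * a ^ (-(1/4) : ℝ) * (|y| ^ (-(1/2) : ℝ) * max (1 - w) 0) := by
  have hb : (a * y ^ 2) ^ (-(1/4) : ℝ) = a ^ (-(1/4) : ℝ) * |y| ^ (-(1/2) : ℝ) := by
    rw [mul_rpow ha.le (sq_nonneg _), ← sq_abs, ← rpow_natCast, ← rpow_mul (abs_nonneg _)]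
    norm_num
  have hC : 0 ≤ a ^ (-(1/4) : ℝ) * |y| ^ (-(1/2) : ℝ) := by positivity
  rcases le_total (1/2) w with hw | hw
  · have : w ^ (-(1/4) : ℝ) ≤ (1/2) ^ (-(1/4) : ℝ) :=
      rpow_le_rpow_of_nonpos (by norm_num) hw (by norm_num)
    have : (1/2 : ℝ) ^ (-(1/4) : ℝ) ≤ 2 := by
      rw [one_div, inv_rpow zero_le_two, rpow_neg zero_le_two, inv_inv]
      exact rpow_le_self_of_one_le one_le_two (by norm_num)
    nlinarith [mul_nonneg hC (le_max_right (1 - w) 0)]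
  · have h1 : w ^ (-(1/4) : ℝ) ≤ a ^ (-(1/4) : ℝ) * |y| ^ (-(1/2) : ℝ) :=
      hb ▸ rpow_le_rpow_of_nonpos (by positivity) h (by norm_num)
    have h2 : 1 ≤ 2 * max (1 - w) 0 := by rw [max_eq_left (by linarith)]; linarith
    nlinarith

lemma max_one_sub_rpow_three_le {w : ℝ} (hw : 0 ≤ w) :
    max (1 - w) 0 ^ (3 : ℝ) ≤ (w - 1) ^ 2 := by
  rw [show (3 : ℝ) = (3 : ℕ) by norm_num, rpow_natCast]
  rcases le_total w 1 with h | h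
  · rw [max_eq_left (by linarith)]; nlinarith
  · rw [max_eq_right (by linarith)]; simpa using sq_nonneg (w - 1)

lemma rpow_neg_quarter_mul_rpow_third_le {a c : ℝ} (ha : 0 < a) (ha1 : a ≤ 1) (hc : 0 ≤ c) :
    a ^ (-(1/4) : ℝ) * (c * a) ^ (1/3 : ℝ) ≤ c ^ (1/3 : ℝ) := by
  rw [mul_rpow hc ha.le, mul_left_comm, ← rpow_add ha]
  exact mul_le_of_le_one_right (rpow_nonneg hc _) (rpow_le_one ha.le ha1 (by norm_num))

lemma exists_max_weight {ι : Type*} [Fintype ι] {η : ι → ℝ} (hη0 : ∀ i, 0 ≤ η i) (hη : η ≠ 0)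
    (hη1 : ∑ i, η i = 1) : ∃ j, 0 < η j ∧ η j ≤ 1 ∧ ∑ i, η i ^ 2 ≤ η j := by
  obtain ⟨i₀, hi₀⟩ := Function.ne_iff.mp hη
  have : Nonempty ι := ⟨i₀⟩
  obtain ⟨j, hj⟩ := Finite.exists_max η
  refine ⟨j, (lt_of_le_of_ne (hη0 i₀) (Ne.symm hi₀)).trans_le (hj i₀), ?_, ?_⟩
  · exact hη1 ▸ Finset.single_le_sum (fun i _ => hη0 i) (Finset.mem_univ j)
  · calc ∑ i, η i ^ 2 ≤ ∑ i, η i * η j :=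
          Finset.sum_le_sum fun i _ => by rw [sq]; exact mul_le_mul_of_nonneg_left (hj i) (hη0 i)
      _ = η j := by rw [← Finset.sum_mul, hη1, one_mul]

lemma integrable_abs_rpow_of_le_volume {ν : Measure ℝ} [IsFiniteMeasure ν] (hν : ν ≤ volume)
    {s : ℝ} (hs : -1 < s) (hs0 : s ≤ 0) : Integrable (fun x => |x| ^ s) ν := by
  have hmeas : Measurable (fun x : ℝ => |x| ^ s) := by measurability
  have hball : IntegrableOn (fun x : ℝ => |x| ^ s) (Metric.ball 0 1) := by
    refine integrableOn_ball_of_norm_le_rpow (C := 1) (α := -s) (by simp) (by simp; linarith)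
      (.of_forall fun x => ?_) hmeas.aestronglyMeasurable
    simp [abs_rpow_of_nonneg (abs_nonneg x)]
  have hcompl : IntegrableOn (fun x : ℝ => |x| ^ s) (Metric.ball 0 1)ᶜ ν := by
    refine Measure.integrableOn_of_bounded (M := 1) (measure_ne_top _ _)
      hmeas.aestronglyMeasurable ?_
    filter_upwards [ae_restrict_mem measurableSet_ball.compl] with x hx
    simp only [mem_compl_iff, Metric.mem_ball, dist_zero_right, not_lt, Real.norm_eq_abs] at hx ⊢
    rw [abs_rpow_of_nonneg (abs_nonneg x), abs_abs]
    exact rpow_le_one_of_one_le_of_nonpos hx hs0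
  rw [← integrableOn_univ, ← union_compl_self (Metric.ball (0 : ℝ) 1)]
  exact (hball.mono_measure hν).union hcompl

lemma gaussianReal_zero_one_le_volume : gaussianReal 0 1 ≤ volume := by
  rw [gaussianReal_of_var_ne_zero 0 one_ne_zero]
  conv_rhs => rw [← withDensity_one (μ := (volume : Measure ℝ))]
  refine withDensity_mono (.of_forall fun x => ?_)
  rw [gaussianPDF, Pi.one_apply, ENNReal.ofReal_le_one, gaussianPDFReal]
  have h1 : (√(2 * π * ((1 : ℝ≥0) : ℝ)))⁻¹ ≤ 1 :=
    inv_le_one_of_one_le₀ (one_le_sqrt.mpr (by push_cast; nlinarith [pi_gt_three]))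
  have h2 : rexp (-(x - 0) ^ 2 / (2 * ((1 : ℝ≥0) : ℝ))) ≤ 1 :=
    exp_le_one_iff.mpr (by push_cast; nlinarith [sq_nonneg x])
  exact mul_le_one₀ h1 (exp_pos _).le h2

lemma memLp_sq_gaussianReal (μ : ℝ) (v : ℝ≥0) :
    MemLp (fun x => x ^ 2) 2 (gaussianReal μ v) := by
  rw [memLp_two_iff_integrable_sq (by fun_prop)]
  simpa [← pow_mul, Even.pow_abs ⟨2, rfl⟩] using
    (memLp_id_gaussianReal (μ := μ) (v := v) 4).integrable_norm_pow (by norm_num)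

lemma integral_sq_gaussianReal (μ : ℝ) (v : ℝ≥0) :
    ∫ x, x ^ 2 ∂gaussianReal μ v = μ ^ 2 + v := by
  have := variance_eq_sub (memLp_id_gaussianReal (μ := μ) (v := v) 2)
  rw [variance_id_gaussianReal] at this
  simp only [Pi.pow_apply, id_eq] at this
  rw [integral_id_gaussianReal] at this
  linarith

section Moments

variable {Ω : Type*} {mΩ : MeasurableSpace Ω} {P : Measure Ω}

lemma integral_abs_log_rpow_le {W : Ω → ℝ} {p A B : ℝ} (hp : 0 < p) (hA0 : 0 ≤ A) (hB0 : 0 ≤ B)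
    (hW : AEMeasurable W P) (hW0 : ∀ᵐ ω ∂P, 0 < W ω)
    (hA : ∫⁻ ω, ENNReal.ofReal (W ω ^ (1/4 : ℝ)) ∂P ≤ ENNReal.ofReal A)
    (hB : ∫⁻ ω, ENNReal.ofReal (W ω ^ (-(1/4) : ℝ)) ∂P ≤ ENNReal.ofReal B) :
    ∫ ω, |log (W ω)| ^ p ∂P ≤ (4 * p) ^ p * (A + B) := by
  have hrpow (s : ℝ) : AEMeasurable (fun ω => ENNReal.ofReal (W ω ^ s)) P :=
    (hW.pow_const s).ennreal_ofReal
  rw [integral_eq_lintegral_of_nonneg_ae (.of_forall fun ω => by positivity)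
    (hW.log.abs.pow_const p).aestronglyMeasurable]
  refine ENNReal.toReal_le_of_le_ofReal (by positivity) ?_
  calc ∫⁻ ω, ENNReal.ofReal (|log (W ω)| ^ p) ∂P
      ≤ ∫⁻ ω, ENNReal.ofReal ((4 * p) ^ p) *
          (ENNReal.ofReal (W ω ^ (1/4 : ℝ)) + ENNReal.ofReal (W ω ^ (-(1/4) : ℝ))) ∂P := by
        refine lintegral_mono_ae (hW0.mono fun ω hω => ?_)
        rw [← ENNReal.ofReal_add (by positivity) (by positivity),
          ← ENNReal.ofReal_mul (by positivity)]
        refine ENNReal.ofReal_le_ofReal ?_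
        have := abs_log_rpow_le hω hp (show (0 : ℝ) < 1/4 by norm_num)
        rwa [div_div_eq_mul_div, div_one, mul_comm p] at this
    _ = ENNReal.ofReal ((4 * p) ^ p) * (∫⁻ ω, ENNReal.ofReal (W ω ^ (1/4 : ℝ)) ∂P +
          ∫⁻ ω, ENNReal.ofReal (W ω ^ (-(1/4) : ℝ)) ∂P) := by
        rw [lintegral_const_mul' _ _ ENNReal.ofReal_ne_top, lintegral_add_left' (hrpow _)]
    _ ≤ ENNReal.ofReal ((4 * p) ^ p * (A + B)) := by
        rw [ENNReal.ofReal_mul (by positivity), ENNReal.ofReal_add hA0 hB0]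
        gcongr

lemma lintegral_rpow_quarter_le [IsProbabilityMeasure P] {W : Ω → ℝ} (hW : Integrable W P)
    (hW0 : ∀ ω, 0 ≤ W ω) :
    ∫⁻ ω, ENNReal.ofReal (W ω ^ (1/4 : ℝ)) ∂P ≤ ENNReal.ofReal (1 + ∫ ω, W ω ∂P) := by
  calc ∫⁻ ω, ENNReal.ofReal (W ω ^ (1/4 : ℝ)) ∂P ≤ ∫⁻ ω, ENNReal.ofReal (1 + W ω) ∂P :=
        lintegral_mono fun ω => ENNReal.ofReal_le_ofReal
          (rpow_le_one_add (hW0 ω) (by norm_num) (by norm_num))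
    _ = ENNReal.ofReal (∫ ω, 1 + W ω ∂P) :=
        (ofReal_integral_eq_lintegral_ofReal ((integrable_const 1).add hW)
          (.of_forall fun ω => add_nonneg zero_le_one (hW0 ω))).symm
    _ = ENNReal.ofReal (1 + ∫ ω, W ω ∂P) := by
        rw [integral_add (integrable_const 1) hW, integral_const, probReal_univ, one_smul]

lemma lintegral_abs_rpow_neg_half_mul_le {W Y : Ω → ℝ} (hW : AEMeasurable W P)
    (hY : AEMeasurable Y P) (hW0 : ∀ ω, 0 ≤ W ω) :
    ∫⁻ ω, ENNReal.ofReal (|Y ω| ^ (-(1/2) : ℝ)) * ENNReal.ofReal (max (1 - W ω) 0) ∂P ≤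
      (∫⁻ ω, ENNReal.ofReal (|Y ω| ^ (-(3/4) : ℝ)) ∂P) ^ (2/3 : ℝ) *
        (∫⁻ ω, ENNReal.ofReal ((W ω - 1) ^ 2) ∂P) ^ (1/3 : ℝ) := by
  have hf : AEMeasurable (fun ω => ENNReal.ofReal (|Y ω| ^ (-(1/2) : ℝ))) P :=
    (hY.abs.pow_const _).ennreal_ofReal
  have hg : AEMeasurable (fun ω => ENNReal.ofReal (max (1 - W ω) 0)) P :=
    ((aemeasurable_const.sub hW).max aemeasurable_const).ennreal_ofReal
  have hpow_f (ω : Ω) : ENNReal.ofReal (|Y ω| ^ (-(1/2) : ℝ)) ^ (3/2 : ℝ) =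
      ENNReal.ofReal (|Y ω| ^ (-(3/4) : ℝ)) := by
    rw [ENNReal.ofReal_rpow_of_nonneg (by positivity) (by norm_num), ← rpow_mul (abs_nonneg _)]
    norm_num
  have hpow_g (ω : Ω) : ENNReal.ofReal (max (1 - W ω) 0) ^ (3 : ℝ) ≤
      ENNReal.ofReal ((W ω - 1) ^ 2) := by
    rw [ENNReal.ofReal_rpow_of_nonneg (le_max_right _ _) (by norm_num)]
    exact ENNReal.ofReal_le_ofReal (max_one_sub_rpow_three_le (hW0 ω))
  calc _ ≤ (∫⁻ ω, ENNReal.ofReal (|Y ω| ^ (-(1/2) : ℝ)) ^ (3/2 : ℝ) ∂P) ^ (1 / (3/2) : ℝ) *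
        (∫⁻ ω, ENNReal.ofReal (max (1 - W ω) 0) ^ (3 : ℝ) ∂P) ^ (1/3 : ℝ) :=
        ENNReal.lintegral_mul_le_Lp_mul_Lq P ⟨by norm_num, by norm_num, by norm_num⟩ hf hg
    _ ≤ _ := by
      simp_rw [hpow_f]
      rw [show (1 / (3/2) : ℝ) = 2/3 by norm_num]
      gcongr with ω
      exact hpow_g ω

lemma lintegral_rpow_neg_quarter_le [IsProbabilityMeasure P] {W Y : Ω → ℝ} {a c M : ℝ}
    (hW : AEMeasurable W P) (hY : AEMeasurable Y P) (ha : 0 < a) (ha1 : a ≤ 1) (hc : 0 ≤ c)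
    (hM : 0 ≤ M) (hY0 : ∀ᵐ ω ∂P, Y ω ≠ 0) (hWY : ∀ ω, a * Y ω ^ 2 ≤ W ω)
    (hYM : ∫⁻ ω, ENNReal.ofReal (|Y ω| ^ (-(3/4) : ℝ)) ∂P ≤ ENNReal.ofReal M)
    (hWc : ∫⁻ ω, ENNReal.ofReal ((W ω - 1) ^ 2) ∂P ≤ ENNReal.ofReal (c * a)) :
    ∫⁻ ω, ENNReal.ofReal (W ω ^ (-(1/4) : ℝ)) ∂P ≤
      ENNReal.ofReal (2 + 2 * M ^ (2/3 : ℝ) * c ^ (1/3 : ℝ)) := by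
  set f := fun ω => ENNReal.ofReal (|Y ω| ^ (-(1/2) : ℝ))
  set g := fun ω => ENNReal.ofReal (max (1 - W ω) 0)
  have hW0 (ω : Ω) : 0 ≤ W ω := (by positivity : 0 ≤ a * Y ω ^ 2).trans (hWY ω)
  have hpt : ∀ᵐ ω ∂P, ENNReal.ofReal (W ω ^ (-(1/4) : ℝ)) ≤
      ENNReal.ofReal 2 + ENNReal.ofReal (2 * a ^ (-(1/4) : ℝ)) * (f ω * g ω) := by
    filter_upwards [hY0] with ω hω
    refine (ENNReal.ofReal_le_ofReal (rpow_neg_quarter_le ha hω (hWY ω))).trans_eq ?_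
    rw [ENNReal.ofReal_add (by norm_num) (by positivity), ENNReal.ofReal_mul (by positivity),
      ENNReal.ofReal_mul (rpow_nonneg (abs_nonneg (Y ω)) _)]
  have hfg : AEMeasurable (fun ω => f ω * g ω) P :=
    (hY.abs.pow_const _).ennreal_ofReal.mul
      ((aemeasurable_const.sub hW).max aemeasurable_const).ennreal_ofReal
  calc ∫⁻ ω, ENNReal.ofReal (W ω ^ (-(1/4) : ℝ)) ∂P
      ≤ ∫⁻ ω, ENNReal.ofReal 2 + ENNReal.ofReal (2 * a ^ (-(1/4) : ℝ)) * (f ω * g ω) ∂P :=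
        lintegral_mono_ae hpt
    _ = ENNReal.ofReal 2 + ENNReal.ofReal (2 * a ^ (-(1/4) : ℝ)) * ∫⁻ ω, f ω * g ω ∂P := by
        rw [lintegral_add_left measurable_const, lintegral_const, measure_univ, mul_one,
          lintegral_const_mul'' _ hfg]
    _ ≤ ENNReal.ofReal 2 + ENNReal.ofReal (2 * a ^ (-(1/4) : ℝ)) *
          (ENNReal.ofReal M ^ (2/3 : ℝ) * ENNReal.ofReal (c * a) ^ (1/3 : ℝ)) := by
        gcongr
        refine (lintegral_abs_rpow_neg_half_mul_le hW hY hW0).trans ?_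
        gcongr
    _ = ENNReal.ofReal (2 + 2 * M ^ (2/3 : ℝ) * (a ^ (-(1/4) : ℝ) * (c * a) ^ (1/3 : ℝ))) := by
        rw [ENNReal.ofReal_rpow_of_nonneg hM (by norm_num),
          ENNReal.ofReal_rpow_of_nonneg (by positivity) (by norm_num),
          ← ENNReal.ofReal_mul (by positivity), ← ENNReal.ofReal_mul (by positivity),
          ← ENNReal.ofReal_add (by norm_num) (by positivity)]
        ring_nf
    _ ≤ ENNReal.ofReal (2 + 2 * M ^ (2/3 : ℝ) * c ^ (1/3 : ℝ)) := by
        gcongr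
        exact rpow_neg_quarter_mul_rpow_third_le ha ha1 hc

end Moments

section GaussianWeightedSum

variable {Ω ι : Type*} {mΩ : MeasurableSpace Ω} {P : Measure Ω} [Fintype ι] {Z : ι → Ω → ℝ}
  {η : ι → ℝ}

lemma ProbabilityTheory.HasLaw.ae_ne_zero_of_gaussianReal {X : Ω → ℝ}
    (hX : HasLaw X (gaussianReal 0 1) P) : ∀ᵐ ω ∂P, X ω ≠ 0 := by
  have := nullSingletonClass_gaussianReal (μ := 0) one_ne_zero
  exact ae_of_ae_map hX.aemeasurable (by rw [hX.map_eq]; exact Measure.ae_ne _ 0)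

lemma ProbabilityTheory.HasLaw.memLp_sq_of_gaussianReal {X : Ω → ℝ}
    (hX : HasLaw X (gaussianReal 0 1) P) : MemLp (fun ω => X ω ^ 2) 2 P :=
  (memLp_map_measure_iff (g := fun x => x ^ 2) (by fun_prop) hX.aemeasurable).mp
    (hX.map_eq ▸ memLp_sq_gaussianReal 0 1)

lemma memLp_sum_mul_sq (hZ : ∀ i, HasLaw (Z i) (gaussianReal 0 1) P) :
    MemLp (fun ω => ∑ i, η i * Z i ω ^ 2) 2 P :=
  memLp_finsetSum _ fun i _ => (hZ i).memLp_sq_of_gaussianReal.const_mul _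

lemma integral_sum_mul_sq [IsFiniteMeasure P] (hZ : ∀ i, HasLaw (Z i) (gaussianReal 0 1) P) :
    ∫ ω, ∑ i, η i * Z i ω ^ 2 ∂P = ∑ i, η i := by
  rw [integral_finsetSum _ fun i _ =>
    ((hZ i).memLp_sq_of_gaussianReal.integrable one_le_two).const_mul _]
  refine Finset.sum_congr rfl fun i _ => ?_
  have h := (hZ i).integral_comp (f := fun x => x ^ 2) (by fun_prop)
  rw [Function.comp_def, integral_sq_gaussianReal] at h
  rw [integral_const_mul, h]
  norm_num

lemma variance_sum_mul_sq (hind : iIndepFun Z P) (hZ : ∀ i, HasLaw (Z i) (gaussianReal 0 1) P) :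
    Var[fun ω => ∑ i, η i * Z i ω ^ 2; P] =
      Var[fun x => x ^ 2; gaussianReal 0 1] * ∑ i, η i ^ 2 := by
  have hsum : (fun ω => ∑ i, η i * Z i ω ^ 2) = ∑ i, fun ω => η i * Z i ω ^ 2 := by
    ext ω; simp
  rw [hsum, IndepFun.variance_sum (fun i _ => (hZ i).memLp_sq_of_gaussianReal.const_mul _),
    Finset.mul_sum]
  · refine Finset.sum_congr rfl fun i _ => ?_
    rw [variance_const_mul, ← (hZ i).map_eq, variance_map (by fun_prop) (hZ i).aemeasurable,
      mul_comm]
    rfl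
  · intro i _ j _ hij
    exact (hind.indepFun hij).comp (measurable_const.mul (measurable_id.pow_const 2))
      (measurable_const.mul (measurable_id.pow_const 2))

lemma ae_pos_sum_mul_sq (hZ : ∀ i, HasLaw (Z i) (gaussianReal 0 1) P) (hη0 : ∀ i, 0 ≤ η i)
    (hη : η ≠ 0) : ∀ᵐ ω ∂P, 0 < ∑ i, η i * Z i ω ^ 2 := by
  obtain ⟨i, hi⟩ := Function.ne_iff.mp hη
  filter_upwards [(hZ i).ae_ne_zero_of_gaussianReal] with ω hω
  refine (mul_pos ((hη0 i).lt_of_ne (Ne.symm hi)) (pow_two_pos_of_ne_zero hω)).trans_le ?_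
  exact Finset.single_le_sum (f := fun i => η i * Z i ω ^ 2)
    (fun i _ => mul_nonneg (hη0 i) (sq_nonneg _)) (Finset.mem_univ i)

lemma lintegral_rpow_neg_quarter_sum_mul_sq_le [IsProbabilityMeasure P] (hind : iIndepFun Z P)
    (hZ : ∀ i, HasLaw (Z i) (gaussianReal 0 1) P) (hη0 : ∀ i, 0 ≤ η i) (hη : η ≠ 0)
    (hη1 : ∑ i, η i = 1) :
    ∫⁻ ω, ENNReal.ofReal ((∑ i, η i * Z i ω ^ 2) ^ (-(1/4) : ℝ)) ∂P ≤
      ENNReal.ofReal (2 + 2 * (∫ x, |x| ^ (-(3/4) : ℝ) ∂gaussianReal 0 1) ^ (2/3 : ℝ) *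
        Var[fun x => x ^ 2; gaussianReal 0 1] ^ (1/3 : ℝ)) := by
  obtain ⟨j, ha, ha1, hsq⟩ := exists_max_weight hη0 hη hη1
  have hWY (ω : Ω) : η j * Z j ω ^ 2 ≤ ∑ i, η i * Z i ω ^ 2 :=
    Finset.single_le_sum (f := fun i => η i * Z i ω ^ 2)
      (fun i _ => mul_nonneg (hη0 i) (sq_nonneg _)) (Finset.mem_univ j)
  have hvar : ∫⁻ ω, ENNReal.ofReal ((∑ i, η i * Z i ω ^ 2 - 1) ^ 2) ∂P ≤
      ENNReal.ofReal (Var[fun x => x ^ 2; gaussianReal 0 1] * η j) := by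
    rw [← hη1, ← integral_sum_mul_sq hZ, ← evariance_eq_lintegral_ofReal,
      ← ofReal_variance (memLp_sum_mul_sq hZ), variance_sum_mul_sq hind hZ]
    gcongr
    exact variance_nonneg _ _
  have hZM : ∫⁻ ω, ENNReal.ofReal (|Z j ω| ^ (-(3/4) : ℝ)) ∂P ≤
      ENNReal.ofReal (∫ x, |x| ^ (-(3/4) : ℝ) ∂gaussianReal 0 1) := by
    rw [(hZ j).lintegral_comp (f := fun x => ENNReal.ofReal (|x| ^ (-(3/4) : ℝ))) (by fun_prop),
      ofReal_integral_eq_lintegral_ofReal (integrable_abs_rpow_of_le_volume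
        gaussianReal_zero_one_le_volume (by norm_num) (by norm_num))
        (.of_forall fun x => by positivity)]
  exact lintegral_rpow_neg_quarter_le (memLp_sum_mul_sq hZ).aemeasurable (hZ j).aemeasurable
    ha ha1 (variance_nonneg _ _) (integral_nonneg fun x => by positivity)
    (hZ j).ae_ne_zero_of_gaussianReal hWY hZM hvar

lemma integral_abs_log_sum_mul_sq_le [IsProbabilityMeasure P] {p : ℝ} (hp : 0 < p)
    (hind : iIndepFun Z P) (hZ : ∀ i, HasLaw (Z i) (gaussianReal 0 1) P) (hη0 : ∀ i, 0 ≤ η i)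
    (hη : η ≠ 0) (hη1 : ∑ i, η i = 1) :
    ∫ ω, |log (∑ i, η i * Z i ω ^ 2)| ^ p ∂P ≤
      (4 * p) ^ p * (2 + (2 + 2 * (∫ x, |x| ^ (-(3/4) : ℝ) ∂gaussianReal 0 1) ^ (2/3 : ℝ) *
        Var[fun x => x ^ 2; gaussianReal 0 1] ^ (1/3 : ℝ))) := by
  have hc := variance_nonneg (fun x : ℝ => x ^ 2) (gaussianReal 0 1)
  have hW := memLp_sum_mul_sq (η := η) hZ
  refine integral_abs_log_rpow_le hp zero_le_two (by positivity) hW.aemeasurable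
    (ae_pos_sum_mul_sq hZ hη0 hη) ?_ (lintegral_rpow_neg_quarter_sum_mul_sq_le hind hZ hη0 hη hη1)
  have := lintegral_rpow_quarter_le (hW.integrable one_le_two)
    fun ω => Finset.sum_nonneg fun i _ => mul_nonneg (hη0 i) (sq_nonneg (Z i ω))
  rwa [integral_sum_mul_sq hZ, hη1, one_add_one_eq_two] at this

end GaussianWeightedSum

/-- Uniformly bounded moments of `|log ϖ|` for unit-mean weighted chi-squared
sums `ϖ = ∑ η_j Z_j²`: for each `p ≥ 1` (and each upper bound `B` on the
variance `2 ∑ η_j²`) there is `K_p`, not depending on `N` nor on the weights,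
with `E[|log ϖ|^p] ≤ K_p`. -/
theorem stmt_10 (p : ℝ) (hp : 1 ≤ p) (B : ℝ) :
    ∃ K : ℝ,
      ∀ (N : ℕ) (Ω : Type) (_ : MeasurableSpace Ω) (P : Measure Ω)
        (_ : IsProbabilityMeasure P) (Z : Fin N → Ω → ℝ) (η : Fin N → ℝ),
        iIndepFun Z P →
        (∀ i, Measure.map (Z i) P = gaussianReal 0 1) →
        (∀ i, 0 ≤ η i) → η ≠ 0 → (∑ i, η i) = 1 →
        2 * (∑ i, η i ^ 2) ≤ B →
        ∫ ω, |Real.log (∑ i, η i * Z i ω ^ 2)| ^ p ∂P ≤ K := by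
  refine ⟨_, fun N Ω _ P _ Z η hind hZ hη0 hη hη1 _ =>
    integral_abs_log_sum_mul_sq_le (by linarith) hind (fun i => ?_) hη0 hη hη1⟩
  -- `Measure.map` along a non-a.e.-measurable map is `0`, so the law gives measurability.
  exact ⟨.of_map_ne_zero (by simp [hZ i, IsProbabilityMeasure.ne_zero]), hZ i⟩
end
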